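/- arXiv:1305.0139 — 4 statements merged into one kernel-verified Lean document; each statement's English description precedes it below -/
import Mathlib

section
/- Let T be a non-negative random variable such that P(T > t) ≤ e^{-μt} for all t > 0, where μ > 0. Then for any α with α < μ/√2, one has E[e^{αT}] ≤ 1 + α E[T] + 2(e+1)α²/μ². -/
/-!
By the layer-cake formula, `E[e^{αT} - 1 - αT] = ∫₀^∞ P(T > t) α(e^{αt} - 1) dt`, and the weight
`α(e^{αt} - 1)` is non-negative for every real `α`. Bounding the tail by `e^{-μt}` leaves an
explicit Laplace integral, equal to `α² / (μ(μ - α))` when `α < μ`. For `α < μ/√2` one has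
`μ - α ≥ μ/6`, and `2(e + 1) ≥ 6` turns this into the stated constant.
-/

open MeasureTheory Real Set

lemma mul_exp_mul_sub_one_nonneg (α : ℝ) {t : ℝ} (ht : 0 ≤ t) : 0 ≤ α * (exp (α * t) - 1) := by
  rcases le_total 0 α with hα | hα
  · exact mul_nonneg hα (sub_nonneg.2 (one_le_exp (mul_nonneg hα ht)))
  · exact mul_nonneg_of_nonpos_of_nonpos hα
      (sub_nonpos.2 (exp_le_one_iff.2 (mul_nonpos_of_nonpos_of_nonneg hα ht)))

lemma integral_mul_exp_mul_sub_one (α x : ℝ) :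
    ∫ t in 0..x, α * (exp (α * t) - 1) = exp (α * x) - 1 - α * x := by
  have hderiv (t : ℝ) : HasDerivAt (fun t => exp (α * t) - α * t) (α * (exp (α * t) - 1)) t := by
    have h := (hasDerivAt_id t).const_mul α
    simp only [id, mul_one] at h
    exact (h.exp.sub h).congr_deriv (by ring)
  rw [intervalIntegral.integral_eq_sub_of_hasDerivAt (fun t _ => hderiv t)
    ((by fun_prop : Continuous fun t => α * (exp (α * t) - 1)).intervalIntegrable _ _)]
  simp only [mul_zero, exp_zero, sub_zero]
  ring

lemma exp_neg_mul_mul_mul_exp_mul_sub_one (α μ t : ℝ) :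
    exp (-μ * t) * (α * (exp (α * t) - 1)) = α * exp ((α - μ) * t) - α * exp (-μ * t) := by
  rw [show (α - μ) * t = α * t + -μ * t by ring, exp_add]
  ring

lemma integrableOn_exp_neg_mul_mul_mul_exp_mul_sub_one {α μ : ℝ} (hμ : 0 < μ) (hαμ : α < μ) :
    IntegrableOn (fun t => exp (-μ * t) * (α * (exp (α * t) - 1))) (Ioi 0) := by
  simp_rw [exp_neg_mul_mul_mul_exp_mul_sub_one]
  exact ((integrableOn_exp_mul_Ioi (by linarith) 0).const_mul α).sub
    ((integrableOn_exp_mul_Ioi (by linarith) 0).const_mul α)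

lemma integral_Ioi_exp_neg_mul_mul_mul_exp_mul_sub_one {α μ : ℝ} (hμ : 0 < μ) (hαμ : α < μ) :
    ∫ t in Ioi 0, exp (-μ * t) * (α * (exp (α * t) - 1)) = α ^ 2 / (μ * (μ - α)) := by
  have hαμ' : α - μ < 0 := by linarith
  have hμ' : -μ < 0 := by linarith
  simp_rw [exp_neg_mul_mul_mul_exp_mul_sub_one]
  rw [integral_sub ((integrableOn_exp_mul_Ioi hαμ' 0).const_mul α)
      ((integrableOn_exp_mul_Ioi hμ' 0).const_mul α), integral_const_mul, integral_const_mul,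
    integral_exp_mul_Ioi hαμ', integral_exp_mul_Ioi hμ']
  have : μ - α ≠ 0 := by linarith
  simp only [mul_zero, exp_zero]
  rw [show α - μ = -(μ - α) by ring]
  field_simp
  ring

lemma sq_div_mul_sub_le {α μ : ℝ} (hμ : 0 < μ) (hα : α < μ / √2) :
    α ^ 2 / (μ * (μ - α)) ≤ 2 * (exp 1 + 1) * α ^ 2 / μ ^ 2 := by
  have hsqrt : 6 / 5 ≤ √2 := Real.le_sqrt_of_sq_le (by norm_num)
  have hα' : α ≤ 5 / 6 * μ := by
    refine hα.le.trans ?_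
    rw [div_le_iff₀ (by positivity)]
    nlinarith
  have he : 2 ≤ exp 1 := by linarith [add_one_le_exp 1]
  have hkey : μ ≤ 2 * (exp 1 + 1) * (μ - α) := by nlinarith
  rw [div_le_div_iff₀ (by nlinarith) (by positivity)]
  nlinarith [mul_le_mul_of_nonneg_left hkey (mul_nonneg (sq_nonneg α) hμ.le)]

section TailBound

variable {Ω : Type*} [MeasurableSpace Ω] {P : Measure Ω} {T : Ω → ℝ} {μ : ℝ}

lemma lintegral_meas_lt_mul_le_of_tail_le
    (htail : ∀ t : ℝ, 0 < t → P {ω | t < T ω} ≤ ENNReal.ofReal (exp (-μ * t))) (g : ℝ → ℝ) :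
    ∫⁻ t in Ioi 0, P {ω | t < T ω} * ENNReal.ofReal (g t)
      ≤ ∫⁻ t in Ioi 0, ENNReal.ofReal (exp (-μ * t) * g t) := by
  refine setLIntegral_mono' measurableSet_Ioi fun t ht => ?_
  rw [ENNReal.ofReal_mul (exp_pos _).le]
  exact mul_le_mul_left (htail t ht) _

lemma integrable_of_tail_le_exp (hT : AEMeasurable T P) (hT0 : 0 ≤ᵐ[P] T) (hμ : 0 < μ)
    (htail : ∀ t : ℝ, 0 < t → P {ω | t < T ω} ≤ ENNReal.ofReal (exp (-μ * t))) :
    Integrable T P := by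
  refine ⟨hT.aestronglyMeasurable, ?_⟩
  rw [hasFiniteIntegral_iff_ofReal hT0, lintegral_eq_lintegral_meas_lt P hT0 hT]
  calc ∫⁻ t in Ioi 0, P {ω | t < T ω}
      ≤ ∫⁻ t in Ioi 0, ENNReal.ofReal (exp (-μ * t) * 1) := by
        simpa using lintegral_meas_lt_mul_le_of_tail_le htail 1
    _ < ⊤ := by
        have h := (integrableOn_exp_mul_Ioi (neg_lt_zero.2 hμ) 0).hasFiniteIntegral
        simpa [hasFiniteIntegral_iff_ofReal (ae_of_all _ fun t => (exp_pos _).le)] using h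

lemma lintegral_exp_mul_sub_one_sub_le_of_tail_le (hT : AEMeasurable T P) (hT0 : 0 ≤ᵐ[P] T)
    (hμ : 0 < μ)
    (htail : ∀ t : ℝ, 0 < t → P {ω | t < T ω} ≤ ENNReal.ofReal (exp (-μ * t)))
    {α : ℝ} (hαμ : α < μ) :
    ∫⁻ ω, ENNReal.ofReal (exp (α * T ω) - 1 - α * T ω) ∂P
      ≤ ENNReal.ofReal (α ^ 2 / (μ * (μ - α))) := by
  have hweight_nonneg : ∀ t ∈ Ioi (0 : ℝ), 0 ≤ α * (exp (α * t) - 1) :=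
    fun t ht => mul_exp_mul_sub_one_nonneg α (le_of_lt ht)
  have hlayer := lintegral_comp_eq_lintegral_meas_lt_mul P hT0 hT
    (fun _ _ => (by fun_prop : Continuous fun t => α * (exp (α * t) - 1)).intervalIntegrable _ _)
    ((ae_restrict_iff' measurableSet_Ioi).2 (ae_of_all _ hweight_nonneg))
  simp only [integral_mul_exp_mul_sub_one] at hlayer
  rw [hlayer, ← integral_Ioi_exp_neg_mul_mul_mul_exp_mul_sub_one hμ hαμ,
    ofReal_integral_eq_lintegral_ofReal]
  · exact lintegral_meas_lt_mul_le_of_tail_le htail _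
  · exact integrableOn_exp_neg_mul_mul_mul_exp_mul_sub_one hμ hαμ
  · filter_upwards [ae_restrict_mem measurableSet_Ioi] with t ht
    exact mul_nonneg (exp_pos _).le (hweight_nonneg t ht)

theorem integral_exp_mul_le_of_tail_le [IsProbabilityMeasure P] (hT : AEMeasurable T P)
    (hT0 : 0 ≤ᵐ[P] T) (hμ : 0 < μ)
    (htail : ∀ t : ℝ, 0 < t → P {ω | t < T ω} ≤ ENNReal.ofReal (exp (-μ * t)))
    {α : ℝ} (hαμ : α < μ) :
    ∫ ω, exp (α * T ω) ∂P ≤ 1 + α * ∫ ω, T ω ∂P + α ^ 2 / (μ * (μ - α)) := by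
  set D : Ω → ℝ := fun ω => exp (α * T ω) - 1 - α * T ω
  have hD0 : ∀ ω, 0 ≤ D ω := fun ω => by linarith [add_one_le_exp (α * T ω)]
  have hDmeas : AEStronglyMeasurable D P := by
    have := hT.aestronglyMeasurable
    fun_prop
  have hDlint := lintegral_exp_mul_sub_one_sub_le_of_tail_le hT hT0 hμ htail hαμ
  have hDint : Integrable D P := by
    refine ⟨hDmeas, ?_⟩
    rw [hasFiniteIntegral_iff_ofReal (ae_of_all _ hD0)]
    exact hDlint.trans_lt ENNReal.ofReal_lt_top
  have hDle : ∫ ω, D ω ∂P ≤ α ^ 2 / (μ * (μ - α)) := by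
    rw [integral_eq_lintegral_of_nonneg_ae (ae_of_all _ hD0) hDmeas]
    exact ENNReal.toReal_le_of_le_ofReal
      (div_nonneg (sq_nonneg α) (mul_pos hμ (sub_pos.2 hαμ)).le) hDlint
  have hlin : Integrable (fun ω => α * T ω) P :=
    (integrable_of_tail_le_exp hT hT0 hμ htail).const_mul α
  have haffine : Integrable (fun ω => 1 + α * T ω) P := (integrable_const 1).add hlin
  calc ∫ ω, exp (α * T ω) ∂P = ∫ ω, D ω + (1 + α * T ω) ∂P := by simp only [D]; ring_nf
    _ = ∫ ω, D ω ∂P + (1 + α * ∫ ω, T ω ∂P) := by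
      rw [integral_add hDint haffine,
        integral_add (integrable_const 1) hlin, integral_const_mul]
      simp
    _ ≤ 1 + α * ∫ ω, T ω ∂P + α ^ 2 / (μ * (μ - α)) := by linarith

end TailBound

/-- If a non-negative random variable `T` satisfies the tail bound
`P(T > t) ≤ e^{-μ t}` for all `t > 0`, then for any `α < μ/√2`,
`E[e^{α T}] ≤ 1 + α E[T] + 2(e+1) α² / μ²`. -/
theorem stmt_0 {Ω : Type*} [MeasurableSpace Ω] (P : Measure Ω) [IsProbabilityMeasure P]
    (T : Ω → ℝ) (hTmeas : Measurable T) (hTpos : ∀ ω, 0 ≤ T ω)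
    (μ : ℝ) (hμ : 0 < μ)
    (htail : ∀ t : ℝ, 0 < t → P {ω | t < T ω} ≤ ENNReal.ofReal (Real.exp (-μ * t)))
    (α : ℝ) (hα : α < μ / Real.sqrt 2) :
    ∫ ω, Real.exp (α * T ω) ∂P ≤
      1 + α * ∫ ω, T ω ∂P + 2 * (Real.exp 1 + 1) * α ^ 2 / μ ^ 2 := by
  have hαμ : α < μ := hα.trans_le (div_le_self hμ.le one_lt_sqrt_two.le)
  linarith [sq_div_mul_sub_le hμ hα,
    integral_exp_mul_le_of_tail_le hTmeas.aemeasurable (ae_of_all _ hTpos) hμ htail hαμ]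
end

section
/- For every real x ≥ √2, one has (x - 1)·eˣ ≥ x³/2. -/
/-
Multiplying the Taylor bound `1 + x + x²/2 ≤ eˣ` (valid for `x ≥ 0`) by `x - 1 ≥ 0` gives
`(x - 1)·eˣ ≥ x³/2 + (x²/2 - 1)`, and the correction term `x²/2 - 1` is nonnegative exactly
when `x ≥ √2`.
-/

theorem Real.cube_div_two_add_sq_div_two_sub_one_le_sub_one_mul_exp {x : ℝ} (hx : 1 ≤ x) :
    x ^ 3 / 2 + (x ^ 2 / 2 - 1) ≤ (x - 1) * Real.exp x :=
  calc x ^ 3 / 2 + (x ^ 2 / 2 - 1) = (x - 1) * (1 + x + x ^ 2 / 2) := by ring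
    _ ≤ (x - 1) * Real.exp x :=
      mul_le_mul_of_nonneg_left (Real.quadratic_le_exp_of_nonneg (by linarith)) (by linarith)

/-- For every real `x ≥ √2`, one has `(x - 1)·eˣ ≥ x³/2`. -/
theorem stmt_2 (x : ℝ) (hx : Real.sqrt 2 ≤ x) :
    x ^ 3 / 2 ≤ (x - 1) * Real.exp x := by
  have hx_sq : 2 ≤ x ^ 2 := (Real.sqrt_le_left ((Real.sqrt_nonneg 2).trans hx)).mp hx
  have hx_one : 1 ≤ x := (Real.one_le_sqrt.mpr one_le_two).trans hx
  linarith [Real.cube_div_two_add_sq_div_two_sub_one_le_sub_one_mul_exp hx_one]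
end

section
/- Let A be a finite connected subset of ℤ² and let R be the smallest axis-aligned rectangle in ℤ² containing A. Then |∂*_e R| ≤ |∂*_e A|, where ∂*_e denotes the outer edge boundary. -/
/-- Nearest-neighbour adjacency on `ℤ^d`. -/
def latAdj {d : ℕ} (x y : Fin d → ℤ) : Prop := (∑ i, |x i - y i|) = 1

/-- The unbounded (infinite) connected component of the complement of `A`:
points outside `A` whose connected component in the complement is infinite. -/
def extComp {d : ℕ} (A : Set (Fin d → ℤ)) : Set (Fin d → ℤ) :=
  {y | y ∉ A ∧
    {z | Relation.ReflTransGen (fun u v => latAdj u v ∧ u ∉ A ∧ v ∉ A) y z}.Infinite}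

/-- The outer vertex boundary `∂*A`: points of `A` adjacent to the unbounded
component of the complement. -/
def outerVB {d : ℕ} (A : Set (Fin d → ℤ)) : Set (Fin d → ℤ) :=
  {x | x ∈ A ∧ ∃ y ∈ extComp A, latAdj x y}

/-- The outer edge boundary `∂*_e A`: edges `(x,y)` with `x ∈ A` and `y` in the
unbounded component of the complement. -/
def outerEB {d : ℕ} (A : Set (Fin d → ℤ)) : Set ((Fin d → ℤ) × (Fin d → ℤ)) :=
  {e | e.1 ∈ A ∧ e.2 ∈ extComp A ∧ latAdj e.1 e.2}

/-- `A` is connected with respect to nearest-neighbour adjacency. -/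
def ConnSet {d : ℕ} (A : Set (Fin d → ℤ)) : Prop :=
  ∀ x ∈ A, ∀ y ∈ A, Relation.ReflTransGen (fun u v => latAdj u v ∧ u ∈ A ∧ v ∈ A) x y

/-- An axis-aligned lattice box (rectangle when `d = 2`). -/
def IsBox {d : ℕ} (R : Set (Fin d → ℤ)) : Prop :=
  ∃ a b : Fin d → ℤ, R = {x | ∀ i, a i ≤ x i ∧ x i ≤ b i}

/-- The projection of `A` onto the hyperplane orthogonal to the `i`-th coordinate. -/
def latProj {d : ℕ} (A : Set (Fin d → ℤ)) (i : Fin d) : Set (Fin d → ℤ) :=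
  (fun x => Function.update x i 0) '' A

/-!
Write `R = [a, b]`. An outer boundary edge of `R` leaves a face of `R`, say from `u` in
direction `s • eᵢ`. Because `A` is connected and meets every side of its bounding box, the
row of `R` through `u` parallel to `eᵢ` meets `A`; the extreme point `m` of `A` on that row in
direction `s • eᵢ` carries an outer boundary edge `(m, m + s • eᵢ)` of `A`, since the ray beyond
`m` avoids `A` and is infinite. Pushing that edge along the row onto the face gives back the
edge at `u`, so pushing edges is a surjection `∂*_e A → ∂*_e R`.
-/

open Function Set

section

variable {d : ℕ}

lemma abs_sub_le_one_of_latAdj {x y : Fin d → ℤ} (h : latAdj x y) (k : Fin d) :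
    |x k - y k| ≤ 1 :=
  h ▸ Finset.single_le_sum (f := fun k => |x k - y k|) (fun _ _ => abs_nonneg _)
    (Finset.mem_univ k)

lemma latAdj_iff_exists_single {x y : Fin d → ℤ} :
    latAdj x y ↔ ∃ i s, |s| = 1 ∧ y = x + Pi.single i s := by
  constructor
  · intro h
    set v := y - x with hv
    have hsum : ∑ k, |v k| = 1 := by simpa [latAdj, abs_sub_comm, hv] using h
    obtain ⟨i, hi⟩ : ∃ i, v i ≠ 0 := by
      by_contra! h0
      simp [h0] at hsum
    have hsplit := Finset.add_sum_erase Finset.univ (fun k => |v k|) (Finset.mem_univ i)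
    have hrest : ∑ k ∈ Finset.univ.erase i, |v k| = 0 := by
      have := Finset.sum_nonneg (s := Finset.univ.erase i) fun k _ => abs_nonneg (v k)
      have := abs_pos.2 hi
      omega
    have hvi : |v i| = 1 := by omega
    refine ⟨i, v i, hvi, ?_⟩
    have hvs : v = Pi.single i (v i) := by
      funext k
      by_cases hk : k = i
      · subst hk; simp
      · rw [Pi.single_eq_of_ne hk]
        exact abs_eq_zero.1 ((Finset.sum_eq_zero_iff_of_nonneg fun k _ => abs_nonneg (v k)).1
          hrest k (Finset.mem_erase.2 ⟨hk, Finset.mem_univ k⟩))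
    rw [← hvs, hv, add_sub_cancel]
  · rintro ⟨i, s, hs, rfl⟩
    simp [latAdj, Pi.single_apply, apply_ite (fun t : ℤ => |t|), hs]

lemma latAdj_add_single (x : Fin d → ℤ) (i : Fin d) {s : ℤ} (hs : |s| = 1) :
    latAdj x (x + Pi.single i s) :=
  latAdj_iff_exists_single.2 ⟨i, s, hs, rfl⟩

lemma mem_extComp_of_ray {S : Set (Fin d → ℤ)} {y : Fin d → ℤ} {i : Fin d} {s : ℤ}
    (hs : |s| = 1) (hray : ∀ n : ℕ, y + Pi.single i (s * n) ∉ S) : y ∈ extComp S := by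
  have hs0 : s ≠ 0 := by rintro rfl; simp at hs
  refine ⟨by simpa using hray 0, ?_⟩
  refine infinite_of_injective_forall_mem (f := fun n : ℕ => y + Pi.single i (s * n))
    (fun m n hmn => ?_) fun n => ?_
  · simpa [hs0] using congrFun hmn i
  · induction n with
    | zero => simpa using Relation.ReflTransGen.refl
    | succ n ih =>
      refine ih.tail ⟨?_, hray n, hray (n + 1)⟩
      convert latAdj_add_single (y + Pi.single i (s * n)) i hs using 1
      rw [add_assoc, ← Pi.single_add]
      push_cast
      ring_nf

lemma add_single_mem_outerEB {A : Set (Fin d → ℤ)} {m : Fin d → ℤ} {i : Fin d} {s : ℤ}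
    (hm : m ∈ A) (hs : |s| = 1) (hray : ∀ n : ℕ, m + Pi.single i (s * (n + 1)) ∉ A) :
    (m, m + Pi.single i s) ∈ outerEB A := by
  refine ⟨hm, mem_extComp_of_ray (i := i) hs fun n => ?_, latAdj_add_single m i hs⟩
  rw [add_assoc, ← Pi.single_add, ← mul_one_add, add_comm (1 : ℤ)]
  exact hray n

lemma outerEB_finite {A : Set (Fin d → ℤ)} (hA : A.Finite) : (outerEB A).Finite := by
  refine ((hA.prod (finite_Icc (-1 : Fin d → ℤ) 1)).image
    fun p => (p.1, p.1 + p.2)).subset ?_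
  rintro ⟨x, y⟩ ⟨hx, -, hxy : latAdj x y⟩
  have hk := abs_sub_le_one_of_latAdj hxy
  refine ⟨(x, y - x), ⟨hx, fun k => ?_, fun k => ?_⟩, by simp⟩ <;>
    have := abs_le.1 (hk k) <;> simp <;> omega

lemma isBox_iff_exists_Icc {R : Set (Fin d → ℤ)} : IsBox R ↔ ∃ a b, R = Icc a b := by
  simp only [IsBox, Icc, Pi.le_def, ← forall_and]

lemma le_of_isBox_Icc_minimal {A : Set (Fin d → ℤ)} {a b : Fin d → ℤ} (hne : A.Nonempty)
    (hA : A ⊆ Icc a b) (hmin : ∀ R', IsBox R' → A ⊆ R' → Icc a b ⊆ R')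
    {a' b' : Fin d → ℤ} (hA' : A ⊆ Icc a' b') : a' ≤ a ∧ b ≤ b' := by
  obtain ⟨x, hx⟩ := hne
  exact (Icc_subset_Icc_iff ((hA hx).1.trans (hA hx).2)).1
    (hmin _ (isBox_iff_exists_Icc.2 ⟨a', b', rfl⟩) hA')

lemma exists_mem_apply_eq_of_isBox_Icc_minimal {A : Set (Fin d → ℤ)} {a b : Fin d → ℤ}
    (hne : A.Nonempty) (hA : A ⊆ Icc a b) (hmin : ∀ R', IsBox R' → A ⊆ R' → Icc a b ⊆ R')
    (i : Fin d) : (∃ x ∈ A, x i = a i) ∧ ∃ x ∈ A, x i = b i := by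
  constructor
  · by_contra! h
    have hA' : A ⊆ Icc (update a i (a i + 1)) b := fun x hx =>
      ⟨update_le_iff.2 ⟨lt_of_le_of_ne ((hA hx).1 i) (h x hx).symm, fun k _ => (hA hx).1 k⟩,
        (hA hx).2⟩
    simpa using (le_of_isBox_Icc_minimal hne hA hmin hA').1 i
  · by_contra! h
    have hA' : A ⊆ Icc a (update b i (b i - 1)) := fun x hx =>
      ⟨(hA hx).1, le_update_iff.2
        ⟨Int.le_sub_one_of_lt (lt_of_le_of_ne ((hA hx).2 i) (h x hx)), fun k _ => (hA hx).2 k⟩⟩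
    simpa using (le_of_isBox_Icc_minimal hne hA hmin hA').2 i

lemma apply_eq_of_mem_Icc_of_add_single_notMem {a b u : Fin d → ℤ} {i : Fin d} {s : ℤ}
    (hs : |s| = 1) (hu : u ∈ Icc a b) (hw : u + Pi.single i s ∉ Icc a b) :
    u i = if 0 < s then b i else a i := by
  have hak : a i ≤ u i := hu.1 i
  have hbk : u i ≤ b i := hu.2 i
  by_contra hface
  have hsi : s = 1 ∨ s = -1 := abs_eq (zero_le_one' ℤ) |>.1 hs
  refine hw ⟨fun k => ?_, fun k => ?_⟩ <;> by_cases hk : k = i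
  · subst hk
    rcases hsi with rfl | rfl <;> simp at hface ⊢ <;> omega
  · simpa [Pi.single_eq_of_ne hk] using hu.1 k
  · subst hk
    rcases hsi with rfl | rfl <;> simp at hface ⊢ <;> omega
  · simpa [Pi.single_eq_of_ne hk] using hu.2 k

lemma ConnSet.exists_mem_apply_eq {A : Set (Fin d → ℤ)} (hA : ConnSet A) {x y : Fin d → ℤ}
    (hx : x ∈ A) (hy : y ∈ A) {j : Fin d} {t : ℤ} (hxt : x j ≤ t) (hty : t ≤ y j) :
    ∃ z ∈ A, z j = t := by
  induction hA x hx y hy with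
  | refl => exact ⟨x, hx, le_antisymm hxt hty⟩
  | @tail b c _ hbc ih =>
    by_cases hbt : t ≤ b j
    · exact ih hbc.2.1 hbt
    · have := abs_le.1 (abs_sub_le_one_of_latAdj hbc.1 j)
      exact ⟨c, hbc.2.2, by omega⟩

def pushEdge (a b : Fin d → ℤ) (e : (Fin d → ℤ) × (Fin d → ℤ)) :
    (Fin d → ℤ) × (Fin d → ℤ) :=
  let v := e.2 - e.1
  let p : Fin d → ℤ := fun k => if 0 < v k then b k else if v k < 0 then a k else e.1 k
  (p, p + v)

lemma pushEdge_add_single (a b x : Fin d → ℤ) (i : Fin d) {s : ℤ} (hs : s ≠ 0) :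
    pushEdge a b (x, x + Pi.single i s) =
      (update x i (if 0 < s then b i else a i),
        update x i (if 0 < s then b i else a i) + Pi.single i s) := by
  have hp : (fun k => if 0 < (Pi.single i s : Fin d → ℤ) k then b k
      else if (Pi.single i s : Fin d → ℤ) k < 0 then a k else x k) =
      update x i (if 0 < s then b i else a i) := by
    funext k
    by_cases hk : k = i
    · subst hk
      rcases hs.lt_or_gt with h | h <;> simp [h, h.not_gt]
    · simp [hk]
  simp only [pushEdge, add_sub_cancel_left, hp]

end

lemma outerEB_Icc_subset_image_pushEdge {A : Set (Fin 2 → ℤ)} {a b : Fin 2 → ℤ}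
    (hA : A.Finite) (hrow : ∀ j t, a j ≤ t → t ≤ b j → ∃ x ∈ A, x j = t) :
    outerEB (Icc a b) ⊆ pushEdge a b '' outerEB A := by
  rintro ⟨u, w⟩ ⟨hu, hw, huw : latAdj u w⟩
  obtain ⟨i, s, hs, rfl⟩ := latAdj_iff_exists_single.1 huw
  have hs0 : s ≠ 0 := by rintro rfl; simp at hs
  have hrev : ∀ k, k ≠ i → k = i.rev := by fin_cases i <;> decide
  have hrev_ne : i.rev ≠ i := by fin_cases i <;> decide
  obtain ⟨m, ⟨hmA, hmu⟩, hmax⟩ := exists_max_image {z ∈ A | z i.rev = u i.rev}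
    (fun z => s * z i) (hA.subset (sep_subset A _)) (hrow i.rev (u i.rev) (hu.1 _) (hu.2 _))
  refine ⟨(m, m + Pi.single i s), add_single_mem_outerEB hmA hs fun n hn => ?_, ?_⟩
  · have := hmax _ ⟨hn, by simpa [Pi.single_eq_of_ne hrev_ne] using hmu⟩
    have hss : s * s = 1 := by rw [← abs_mul_abs_self, hs, one_mul]
    simp only [Pi.add_apply, Pi.single_eq_same] at this
    nlinarith
  · rw [pushEdge_add_single a b m i hs0, ← apply_eq_of_mem_Icc_of_add_single_notMem hs hu hw.1]
    have hm_push : update m i (u i) = u :=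
      update_eq_iff.2 ⟨rfl, fun k hk => by rw [hrev k hk]; exact hmu⟩
    rw [hm_push]

/-- If `R` is the smallest axis-aligned rectangle in `ℤ²` containing the finite
connected set `A`, then `|∂*_e R| ≤ |∂*_e A|`. -/
theorem stmt_4 (A R : Set (Fin 2 → ℤ)) (hfin : A.Finite) (hne : A.Nonempty)
    (hconn : ConnSet A) (hbox : IsBox R) (hAR : A ⊆ R)
    (hmin : ∀ R' : Set (Fin 2 → ℤ), IsBox R' → A ⊆ R' → R ⊆ R') :
    (outerEB R).ncard ≤ (outerEB A).ncard := by
  obtain ⟨a, b, rfl⟩ := isBox_iff_exists_Icc.1 hbox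
  have hrow : ∀ j t, a j ≤ t → t ≤ b j → ∃ x ∈ A, x j = t := by
    intro j t hat htb
    obtain ⟨⟨x, hx, hxj⟩, ⟨y, hy, hyj⟩⟩ :=
      exists_mem_apply_eq_of_isBox_Icc_minimal hne hAR hmin j
    exact hconn.exists_mem_apply_eq hx hy (hxj ▸ hat) (hyj ▸ htb)
  calc (outerEB (Icc a b)).ncard
      ≤ (pushEdge a b '' outerEB A).ncard :=
        ncard_le_ncard (outerEB_Icc_subset_image_pushEdge hfin hrow)
          ((outerEB_finite hfin).image _)
    _ ≤ (outerEB A).ncard := ncard_image_le (outerEB_finite hfin)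
end

section
/- Let (Y_n) be a discrete-time reversible Markov chain on a finite state space with reversible measure μ̃. Then for all states r, s and all n ≥ 1, P_r(Y_n = s) ≤ 2·√(μ̃(s)/μ̃(r))·exp(-(d(r,s))²/(2n)), where d(r,s) is the graph distance in the transition graph of the chain (Varopoulos–Carne bound), and consequently if d(r,s) ≥ D then P_r(∃ k ≤ n : Y_k = s) ≤ 2n·√(μ̃(s)/μ̃(r))·exp(-D²/(2n)). -/
/-!
Carne's argument. Expand `x ^ n = ∑ⱼ P(Zₙ = 2j - n) T_{2j-n}(x)`, with `Zₙ` the simple random walk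
and `T_k` the Chebyshev polynomials. Conjugating `K` by `diag √μ` gives a symmetric matrix with
eigenvalues in `[-1, 1]`, where `|T_k| ≤ 1`; hence `|T_k(K) r s| ≤ √(μ s / μ r)`. As `T_k` has
degree `|k|` and `(K ^ m) r s = 0` for `m < D`, only the terms with `|2j - n| ≥ D` survive, and
their total weight `P(|Zₙ| ≥ D)` is at most `2 exp (-D² / 2n)` by the Chernoff bound
`2 e^{-tD} cosh(t)ⁿ` at `t = D / n`.
-/

open MeasureTheory Polynomial Polynomial.Chebyshev Matrix Real Finset

/-- `P(Zₙ = 2j - n)` for the simple random walk `Zₙ` started at `0`. -/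
noncomputable def srwProb (n j : ℕ) : ℝ := n.choose j / 2 ^ n

lemma sum_srwProb_mul_exp (n : ℕ) (t : ℝ) :
    ∑ j ∈ range (n + 1), srwProb n j * exp ((2 * j - n) * t) = cosh t ^ n := by
  rw [cosh_eq, div_pow, add_pow, sum_div]
  refine sum_congr rfl fun j hj => ?_
  have hjn : j ≤ n := Nat.lt_succ_iff.mp (mem_range.mp hj)
  rw [srwProb, ← exp_nat_mul, ← exp_nat_mul, ← exp_add, Nat.cast_sub hjn]
  ring_nf

lemma sum_srwProb_mul_cosh (n : ℕ) (t : ℝ) :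
    ∑ j ∈ range (n + 1), srwProb n j * cosh ((2 * j - n) * t) = cosh t ^ n := by
  calc ∑ j ∈ range (n + 1), srwProb n j * cosh ((2 * j - n) * t)
      = (∑ j ∈ range (n + 1), srwProb n j * exp ((2 * j - n) * t)
          + ∑ j ∈ range (n + 1), srwProb n j * exp ((2 * j - n) * -t)) / 2 := by
        rw [← sum_add_distrib, sum_div]
        refine sum_congr rfl fun j _ => ?_
        rw [cosh_eq]
        ring_nf
    _ = cosh t ^ n := by rw [sum_srwProb_mul_exp, sum_srwProb_mul_exp, cosh_neg]; ring

lemma X_pow_eq_sum_srwProb_smul_T (n : ℕ) :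
    (X : ℝ[X]) ^ n = ∑ j ∈ range (n + 1), srwProb n j • T ℝ (2 * j - n) := by
  have hcosh : StrictMono fun m : ℕ => cosh m := fun a b hab =>
    cosh_lt_cosh.2 (by simpa [abs_of_nonneg] using hab)
  refine eq_of_infinite_eval_eq _ _ ((Set.infinite_range_of_injective hcosh.injective).mono ?_)
  rintro _ ⟨m, rfl⟩
  simp only [Set.mem_ofPred_eq, eval_pow, eval_X, eval_finsetSum, eval_smul, T_real_cosh,
    smul_eq_mul]
  rw [← sum_srwProb_mul_cosh]
  push_cast
  rfl

lemma exp_neg_mul_mul_cosh_pow_le (D : ℝ) (n : ℕ) :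
    exp (-(D / n * D)) * cosh (D / n) ^ n ≤ exp (-D ^ 2 / (2 * n)) := by
  calc exp (-(D / n * D)) * cosh (D / n) ^ n
      ≤ exp (-(D / n * D)) * exp ((D / n) ^ 2 / 2) ^ n := by
        gcongr
        exact cosh_le_exp_half_sq _
    _ = exp (-D ^ 2 / (2 * n)) := by
        rw [← exp_nat_mul, ← exp_add]
        congr 1
        rcases eq_or_ne (n : ℝ) 0 with hn | hn
        · simp [hn]
        · field_simp
          ring

lemma one_le_two_mul_cosh_mul_exp_neg {t x D : ℝ} (ht : 0 ≤ t) (hx : D ≤ |x|) :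
    1 ≤ 2 * cosh (t * x) * exp (-(t * D)) := by
  rw [exp_neg, ← div_eq_mul_inv, one_le_div (exp_pos _), ← cosh_abs, abs_mul, abs_of_nonneg ht,
    cosh_eq]
  have := exp_pos (-(t * |x|))
  have : exp (t * D) ≤ exp (t * |x|) := exp_le_exp.2 (mul_le_mul_of_nonneg_left hx ht)
  linarith

theorem apply_X_pow_le_of_abs_apply_T_le (φ : ℝ[X] →ₗ[ℝ] ℝ) {ρ : ℝ}
    (hρ : ∀ k : ℤ, |φ (T ℝ k)| ≤ ρ) {D : ℕ} (hD : ∀ k : ℤ, k.natAbs < D → φ (T ℝ k) = 0)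
    (n : ℕ) : φ (X ^ n) ≤ 2 * ρ * exp (-(D : ℝ) ^ 2 / (2 * n)) := by
  set t : ℝ := D / n
  have hρ0 : 0 ≤ ρ := (abs_nonneg _).trans (hρ 0)
  have hterm : ∀ k : ℤ, φ (T ℝ k) ≤ ρ * (2 * cosh (t * k) * exp (-(t * D))) := by
    intro k
    by_cases hk : k.natAbs < D
    · rw [hD k hk]
      positivity
    · refine (le_abs_self _).trans ((hρ k).trans (le_mul_of_one_le_right hρ0 ?_))
      refine one_le_two_mul_cosh_mul_exp_neg (by positivity) ?_
      rw [← Int.cast_abs, Int.abs_eq_natAbs]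
      exact_mod_cast not_lt.mp hk
  calc φ (X ^ n) = ∑ j ∈ range (n + 1), srwProb n j * φ (T ℝ (2 * j - n)) := by
        simp [X_pow_eq_sum_srwProb_smul_T n]
    _ ≤ ∑ j ∈ range (n + 1),
          srwProb n j * (ρ * (2 * cosh (t * (2 * j - n : ℤ)) * exp (-(t * D)))) := by
        gcongr with j
        · exact div_nonneg (Nat.cast_nonneg _) (by positivity)
        · exact hterm _
    _ = 2 * ρ * (exp (-(t * D)) * ∑ j ∈ range (n + 1), srwProb n j * cosh ((2 * j - n) * t)) := by
        rw [mul_sum, mul_sum]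
        refine sum_congr rfl fun j _ => ?_
        push_cast
        ring_nf
    _ ≤ 2 * ρ * exp (-(D : ℝ) ^ 2 / (2 * n)) := by
        rw [sum_srwProb_mul_cosh]
        gcongr
        exact exp_neg_mul_mul_cosh_pow_le D n

lemma Polynomial.aeval_units_conj {R A : Type*} [CommSemiring R] [Ring A] [Algebra R A]
    (u : Aˣ) (a : A) (p : R[X]) : aeval (↑u * a * ↑u⁻¹) p = u * aeval a p * ↑u⁻¹ := by
  simpa [ConjAct.units_smul_def] using
    aeval_algHom_apply (MulSemiringAction.toAlgEquiv R A (ConjAct.toConjAct u)) a p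

section

variable {S : Type*} [Fintype S] [DecidableEq S]

lemma Matrix.IsHermitian.aeval_eq {A : Matrix S S ℝ} (hA : A.IsHermitian) (p : ℝ[X]) :
    aeval A p = (hA.eigenvectorUnitary : Matrix S S ℝ) *
      diagonal (fun i => p.eval (hA.eigenvalues i)) *
        star (hA.eigenvectorUnitary : Matrix S S ℝ) := by
  rw [← cfc_polynomial p A hA.isSelfAdjoint, hA.cfc_eq, IsHermitian.cfc,
    Unitary.conjStarAlgAut_apply]
  rfl

lemma abs_unitary_mul_diagonal_mul_star_apply_le {U : Matrix S S ℝ} (hU : U ∈ unitaryGroup S ℝ)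
    {v : S → ℝ} {c : ℝ} (hv : ∀ i, |v i| ≤ c) (r s : S) :
    |(U * diagonal v * star U) r s| ≤ c := by
  have hc : 0 ≤ c := (abs_nonneg _).trans (hv r)
  have hrow : ∀ x, ∑ i, U x i ^ 2 = 1 := fun x => by
    simpa [mul_apply, sq] using congrFun₂ (mem_unitaryGroup_iff.mp hU) x x
  calc |(U * diagonal v * star U) r s| = |∑ i, U r i * v i * U s i| := by
        rw [mul_apply]
        simp [mul_diagonal]
    _ ≤ ∑ i, c * ((U r i ^ 2 + U s i ^ 2) / 2) := by
        refine (abs_sum_le_sum_abs _ _).trans (sum_le_sum fun i _ => ?_)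
        rw [abs_mul, abs_mul]
        have hamgm := two_mul_le_add_sq |U r i| |U s i|
        rw [sq_abs, sq_abs] at hamgm
        calc |U r i| * |v i| * |U s i| ≤ c * (|U r i| * |U s i|) := by
              rw [mul_right_comm, mul_comm c]
              exact mul_le_mul_of_nonneg_left (hv i) (by positivity)
          _ ≤ c * ((U r i ^ 2 + U s i ^ 2) / 2) := by gcongr; linarith
    _ = c := by rw [← mul_sum, ← sum_div, sum_add_distrib, hrow, hrow]; ring

lemma abs_le_one_of_mem_spectrum_of_mem_rowStochastic {K : Matrix S S ℝ}
    (hK : K ∈ rowStochastic ℝ S) {l : ℝ} (hl : l ∈ spectrum ℝ K) : |l| ≤ 1 := by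
  let := Matrix.linftyOpNormedRing (n := S) (α := ℝ)
  let := Matrix.linftyOpNormedAlgebra (n := S) (R := ℝ) (α := ℝ)
  -- the `∞`-operator norm is a `NormOneClass` only on a nonempty index type
  have : Nonempty S := by
    by_contra h
    rw [not_nonempty_iff] at h
    simp [spectrum.of_subsingleton] at hl
  have hnorm : ‖K‖ ≤ 1 := by
    rw [linfty_opNorm_def]
    norm_cast
    refine Finset.sup_le fun x _ => ?_
    rw [← NNReal.coe_le_coe]
    push_cast
    simp only [norm_of_nonneg (hK.1 x _), (mem_rowStochastic_iff_sum.mp hK).2 x, le_rfl]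
  exact (spectrum.norm_le_norm_of_mem hl).trans hnorm

lemma abs_aeval_apply_le_of_reversible {K : Matrix S S ℝ} (hK : K ∈ rowStochastic ℝ S)
    {μ : S → ℝ} (hμ : ∀ x, 0 < μ x) (hrev : ∀ x y, μ x * K x y = μ y * K y x)
    {p : ℝ[X]} (hp : ∀ x, |x| ≤ 1 → |p.eval x| ≤ 1) (r s : S) :
    |aeval K p r s| ≤ √(μ s / μ r) := by
  set d : S → ℝ := fun x => √(μ x)
  have hd : ∀ x, d x ≠ 0 := fun x => (sqrt_pos.2 (hμ x)).ne'
  let u : (Matrix S S ℝ)ˣ := ⟨diagonal d, diagonal d⁻¹, by simp [hd], by simp [hd]⟩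
  have hu : (u : Matrix S S ℝ) = diagonal d := rfl
  have hu_inv : (↑u⁻¹ : Matrix S S ℝ) = diagonal d⁻¹ := rfl
  set A : Matrix S S ℝ := u * K * (↑u⁻¹ : Matrix S S ℝ) with hA_def
  have hA : A.IsHermitian := by
    ext x y
    have hx : d x ^ 2 = μ x := sq_sqrt (hμ x).le
    have hy : d y ^ 2 = μ y := sq_sqrt (hμ y).le
    have := hd x
    have := hd y
    simp only [hA_def, hu, hu_inv, conjTranspose_apply, star_trivial, mul_diagonal, diagonal_mul,
      Pi.inv_apply]
    field_simp
    linear_combination hrev y x + K y x * hy - K x y * hx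
  have hlam : ∀ i, |hA.eigenvalues i| ≤ 1 := fun i =>
    abs_le_one_of_mem_spectrum_of_mem_rowStochastic hK
      (spectrum.units_conjugate (u := u) (R := ℝ) (a := K) ▸ hA.eigenvalues_mem_spectrum_real i)
  have hKA : K = (↑u⁻¹ : Matrix S S ℝ) * A * (↑u⁻¹⁻¹ : Matrix S S ℝ) := by
    simp only [hA_def, inv_inv, mul_assoc, Units.inv_mul_cancel_left, Units.inv_mul, mul_one]
  calc |aeval K p r s|
      = |(hA.eigenvectorUnitary * diagonal (fun i => p.eval (hA.eigenvalues i)) *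
          star (hA.eigenvectorUnitary : Matrix S S ℝ)) r s| * (d s / d r) := by
        rw [hKA, aeval_units_conj, hA.aeval_eq, inv_inv, hu, hu_inv, mul_diagonal, diagonal_mul,
          abs_mul, abs_mul, abs_of_pos (sqrt_pos.2 (hμ s)), Pi.inv_apply,
          abs_of_pos (inv_pos.2 (sqrt_pos.2 (hμ r)))]
        ring
    _ ≤ 1 * (d s / d r) := by
        gcongr
        exact abs_unitary_mul_diagonal_mul_star_apply_le hA.eigenvectorUnitary.2
          (fun i => hp _ (hlam i)) r s
    _ = √(μ s / μ r) := by rw [one_mul, sqrt_div' _ (hμ r).le]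

lemma exists_path_of_pow_apply_ne_zero {R : Type*} [Semiring R] (K : Matrix S S R) (s : S) :
    ∀ (m : ℕ) (x : S), (K ^ m) x s ≠ 0 →
      ∃ p : Fin (m + 1) → S, p 0 = x ∧ p (Fin.last m) = s ∧
        ∀ i : Fin m, K (p i.castSucc) (p i.succ) ≠ 0
  | 0, x, h => by
    have hxs : x = s := by
      by_contra hne
      exact h (by rw [pow_zero, one_apply_ne hne])
    exact ⟨fun _ => x, rfl, hxs, fun i => i.elim0⟩
  | m + 1, x, h => by
    rw [pow_succ', mul_apply] at h
    obtain ⟨y, -, hy⟩ := exists_ne_zero_of_sum_ne_zero h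
    obtain ⟨p, hp0, hpl, hpK⟩ :=
      exists_path_of_pow_apply_ne_zero K s m y (right_ne_zero_of_mul hy)
    refine ⟨Fin.cons x p, Fin.cons_zero _ _, hpl, Fin.cases ?_ fun j => ?_⟩
    · simpa [hp0] using left_ne_zero_of_mul hy
    · simpa [← Fin.succ_castSucc] using hpK j

lemma aeval_apply_eq_zero_of_natDegree_lt {R : Type*} [CommSemiring R] {K : Matrix S S R}
    {r s : S} {D : ℕ} (hK : ∀ m < D, (K ^ m) r s = 0) {p : R[X]} (hp : p.natDegree < D) :
    aeval K p r s = 0 := by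
  rw [aeval_eq_sum_range, Matrix.sum_apply]
  exact sum_eq_zero fun i hi => by
    rw [Matrix.smul_apply, hK i (by rw [mem_range] at hi; omega), smul_zero]

theorem pow_apply_le_two_mul_sqrt_mul_exp {K : Matrix S S ℝ} (hK : K ∈ rowStochastic ℝ S)
    {μ : S → ℝ} (hμ : ∀ x, 0 < μ x) (hrev : ∀ x y, μ x * K x y = μ y * K y x) {r s : S}
    {D : ℕ} (hD : ∀ m < D, (K ^ m) r s = 0) (n : ℕ) :
    (K ^ n) r s ≤ 2 * √(μ s / μ r) * exp (-(D : ℝ) ^ 2 / (2 * n)) := by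
  simpa using apply_X_pow_le_of_abs_apply_T_le ((entryLinearMap ℝ ℝ r s).comp (aeval K).toLinearMap)
    (fun k => abs_aeval_apply_le_of_reversible hK hμ hrev (fun _ => abs_eval_T_real_le_one k) r s)
    (fun k hk => aeval_apply_eq_zero_of_natDegree_lt hD (by rwa [natDegree_T])) n

end

lemma exp_neg_sq_div_two_mul_le_of_le (D : ℝ) {k n : ℕ} (hk : 1 ≤ k) (hkn : k ≤ n) :
    exp (-D ^ 2 / (2 * k)) ≤ exp (-D ^ 2 / (2 * n)) := by
  have : (1 : ℝ) ≤ k := by exact_mod_cast hk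
  rw [neg_div, neg_div]
  gcongr

lemma measure_exists_mem_Icc_le {Ω : Type*} [MeasurableSpace Ω] (P : Measure Ω)
    (E : ℕ → Set Ω) (n : ℕ) {b : ℝ}
    (hE : ∀ k, 1 ≤ k → k ≤ n → P (E k) ≤ ENNReal.ofReal b) :
    P {ω | ∃ k : ℕ, 1 ≤ k ∧ k ≤ n ∧ ω ∈ E k} ≤ ENNReal.ofReal (n * b) := by
  calc P {ω | ∃ k : ℕ, 1 ≤ k ∧ k ≤ n ∧ ω ∈ E k}
      ≤ ∑ k ∈ Icc 1 n, P (E k) := by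
        refine (measure_mono ?_).trans (measure_biUnion_finset_le _ _)
        rintro ω ⟨k, hk1, hkn, hk⟩
        exact Set.mem_biUnion (mem_Icc.mpr ⟨hk1, hkn⟩) hk
    _ ≤ ∑ _k ∈ Icc 1 n, ENNReal.ofReal b :=
        sum_le_sum fun k hk => hE k (mem_Icc.mp hk).1 (mem_Icc.mp hk).2
    _ = ENNReal.ofReal (n * b) := by
        rw [sum_const, Nat.card_Icc, Nat.add_sub_cancel, nsmul_eq_mul, ← ENNReal.ofReal_natCast,
          ← ENNReal.ofReal_mul (Nat.cast_nonneg n)]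

theorem stmt_19_general {S : Type*} [Fintype S] [DecidableEq S]
    (K : Matrix S S ℝ) (μt : S → ℝ)
    (hK0 : ∀ x y, 0 ≤ K x y) (hKrow : ∀ x, ∑ y, K x y = 1)
    (hμpos : ∀ x, 0 < μt x)
    (hrev : ∀ x y, μt x * K x y = μt y * K y x)
    (r s : S) (n : ℕ) (D : ℕ)
    (hdist : ∀ (m : ℕ) (p : Fin (m + 1) → S), p 0 = r → p (Fin.last m) = s →
      (∀ i : Fin m, K (p i.castSucc) (p i.succ) ≠ 0) → D ≤ m)
    {Ω : Type*} [MeasurableSpace Ω] (P : Measure Ω)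
    (Y : ℕ → Ω → S)
    (hlaw : ∀ (k : ℕ) (z : S), P {ω | Y k ω = z} = ENNReal.ofReal ((K ^ k) r z)) :
    (K ^ n) r s ≤ 2 * Real.sqrt (μt s / μt r) * Real.exp (-(D : ℝ) ^ 2 / (2 * n)) ∧
      P {ω | ∃ k : ℕ, 1 ≤ k ∧ k ≤ n ∧ Y k ω = s} ≤
        ENNReal.ofReal (2 * n * Real.sqrt (μt s / μt r) *
          Real.exp (-(D : ℝ) ^ 2 / (2 * n))) := by
  have hK : K ∈ rowStochastic ℝ S := mem_rowStochastic_iff_sum.mpr ⟨hK0, hKrow⟩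
  have hD : ∀ m < D, (K ^ m) r s = 0 := fun m hm => by
    by_contra h
    obtain ⟨p, hp0, hpl, hpK⟩ := exists_path_of_pow_apply_ne_zero K s m r h
    exact absurd (hdist m p hp0 hpl hpK) (not_le.mpr hm)
  have hVC := pow_apply_le_two_mul_sqrt_mul_exp hK hμpos hrev hD
  refine ⟨hVC n, ?_⟩
  rw [mul_assoc 2, mul_left_comm 2, mul_assoc (n : ℝ)]
  refine measure_exists_mem_Icc_le P (fun k => {ω | Y k ω = s}) n fun k hk hkn => ?_
  rw [hlaw]
  exact ENNReal.ofReal_le_ofReal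
    ((hVC k).trans (mul_le_mul_of_nonneg_left (exp_neg_sq_div_two_mul_le_of_le D hk hkn)
      (by positivity)))

/-- Varopoulos–Carne bound and its consequence for hitting probabilities.
Let `K` be the transition matrix of a discrete-time Markov chain on a finite state
space, reversible with respect to the positive measure `μt`. Suppose every path
`r = p 0, p 1, …, p m = s` of positive transition probability has length `m ≥ D`
(i.e. the graph distance from `r` to `s` is at least `D`). Then for `n ≥ 1`:
`P_r(Y_n = s) = (K^n) r s ≤ 2 √(μt s / μt r) exp(-D²/(2n))`, and if `(Y_k)` is a
realization of the chain started at `r` (so that `P {Y_k = s} = (K^k) r s`), then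
`P(∃ k ≤ n, Y_k = s) ≤ 2 n √(μt s / μt r) exp(-D²/(2n))`. -/
theorem stmt_19 {S : Type*} [Fintype S] [DecidableEq S] [Nonempty S]
    (K : Matrix S S ℝ) (μt : S → ℝ)
    (hK0 : ∀ x y, 0 ≤ K x y) (hKrow : ∀ x, ∑ y, K x y = 1)
    (hμpos : ∀ x, 0 < μt x)
    (hrev : ∀ x y, μt x * K x y = μt y * K y x)
    (r s : S) (n : ℕ) (hn : 1 ≤ n) (D : ℕ)
    (hdist : ∀ (m : ℕ) (p : Fin (m + 1) → S), p 0 = r → p (Fin.last m) = s →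
      (∀ i : Fin m, K (p i.castSucc) (p i.succ) ≠ 0) → D ≤ m)
    {Ω : Type*} [MeasurableSpace Ω] (P : Measure Ω) [IsProbabilityMeasure P]
    (Y : ℕ → Ω → S) (hYmeas : ∀ k z, MeasurableSet {ω | Y k ω = z})
    (hlaw : ∀ (k : ℕ) (z : S), P {ω | Y k ω = z} = ENNReal.ofReal ((K ^ k) r z)) :
    (K ^ n) r s ≤ 2 * Real.sqrt (μt s / μt r) * Real.exp (-(D : ℝ) ^ 2 / (2 * n)) ∧
      P {ω | ∃ k : ℕ, 1 ≤ k ∧ k ≤ n ∧ Y k ω = s} ≤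
        ENNReal.ofReal (2 * n * Real.sqrt (μt s / μt r) *
          Real.exp (-(D : ℝ) ^ 2 / (2 * n))) :=
  stmt_19_general K μt hK0 hKrow hμpos hrev r s n D hdist P Y hlaw
end
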